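/- arXiv:1702.04493 — 2 statements merged into one kernel-verified Lean document; each statement's English description precedes it below -/
import Mathlib

section
/- Let α > 2, δ = 2/α, and let g ≥ 0, s > 0, 0 < κ < R be reals. Then 2∫_κ^R (1 − e^{−s g x^{−α}}) x dx = R² − κ² + δκ²·E_{1+δ}(sκ^{−α}g) − δR²·E_{1+δ}(sR^{−α}g), where E_p(z) = ∫_1^∞ e^{−zt} t^{−p} dt is the generalized exponential integral. -/
/-!
Substituting `t = (x / y) ^ α` turns `E_p(c x^{-α})` into
`α x^{α(1-p)} ∫_0^x e^{-c y^{-α}} y^{α(p-1)-1} dy`. For `p = 1 + δ` with `δ = 2 / α`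
the power of `y` is `1`, so `δ x² E_{1+δ}(c x^{-α}) = 2 ∫_0^x e^{-c y^{-α}} y dy`,
and the identity follows by splitting `∫_κ^R = ∫_0^R - ∫_0^κ`.
-/

open Real MeasureTheory intervalIntegral

/-- The generalized exponential integral `E_p(z) = ∫_1^∞ e^{−zt} t^{−p} dt`. -/
noncomputable def genExpInt (p z : ℝ) : ℝ :=
  ∫ t in Set.Ioi (1 : ℝ), Real.exp (-z * t) * t ^ (-p)

open Set

lemma image_mul_rpow_neg_Ioo {α x : ℝ} (hα : 0 < α) (hx : 0 < x) :
    (fun y => x ^ α * y ^ (-α)) '' Ioo 0 x = Ioi 1 := by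
  ext t
  constructor
  · rintro ⟨y, ⟨hy, hyx⟩, rfl⟩
    have hxy : x ^ α * y ^ (-α) = (x / y) ^ α := by
      rw [div_rpow hx.le hy.le, rpow_neg hy.le, div_eq_mul_inv]
    show 1 < x ^ α * y ^ (-α)
    rw [hxy]
    exact one_lt_rpow ((one_lt_div hy).mpr hyx) hα
  · intro ht
    have ht0 : 0 < t := zero_lt_one.trans ht
    refine ⟨x * t ^ (-α⁻¹), ⟨by positivity, ?_⟩, ?_⟩
    · have : t ^ (-α⁻¹) < 1 := rpow_lt_one_of_one_lt_of_neg ht (by simpa using hα)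
      nlinarith
    · show x ^ α * (x * t ^ (-α⁻¹)) ^ (-α) = t
      rw [mul_rpow hx.le (rpow_pos_of_pos ht0 _).le, ← rpow_mul ht0.le, ← mul_assoc,
        ← rpow_add hx, add_neg_cancel, rpow_zero, one_mul, neg_mul_neg, inv_mul_cancel₀ hα.ne',
        rpow_one]

lemma strictAntiOn_mul_rpow_neg {α x : ℝ} (hα : 0 < α) (hx : 0 < x) :
    StrictAntiOn (fun y => x ^ α * y ^ (-α)) (Ioi 0) := fun _ hy₁ _ hy₂ hy =>
  mul_lt_mul_of_pos_left
    (strictAntiOn_rpow_Ioi_of_exponent_neg (neg_lt_zero.mpr hα) hy₁ hy₂ hy)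
    (rpow_pos_of_pos hx α)

theorem genExpInt_mul_rpow_neg_eq {α x : ℝ} (hα : 0 < α) (hx : 0 < x) (p c : ℝ) :
    genExpInt p (c * x ^ (-α)) =
      α * x ^ (α * (1 - p)) *
        ∫ y in Ioo 0 x, exp (-(c * y ^ (-α))) * y ^ (α * (p - 1) - 1) := by
  have hderiv : ∀ y ∈ Ioo 0 x, HasDerivWithinAt (fun y => x ^ α * y ^ (-α))
      (x ^ α * (-α * y ^ (-α - 1))) (Ioo 0 x) y := fun y hy =>
    ((hasDerivAt_rpow_const (Or.inl hy.1.ne')).const_mul _).hasDerivWithinAt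
  have hinj : InjOn (fun y => x ^ α * y ^ (-α)) (Ioo 0 x) :=
    (strictAntiOn_mul_rpow_neg hα hx).injOn.mono Ioo_subset_Ioi_self
  rw [genExpInt, ← image_mul_rpow_neg_Ioo hα hx,
    integral_image_eq_integral_abs_deriv_smul measurableSet_Ioo hderiv hinj,
    ← MeasureTheory.integral_const_mul]
  refine setIntegral_congr_fun measurableSet_Ioo fun y hy => ?_
  have hy : 0 < y := hy.1
  have hxα : 0 < x ^ α := rpow_pos_of_pos hx α
  have hyα : 0 < y ^ (-α) := rpow_pos_of_pos hy _
  have habs : |x ^ α * (-α * y ^ (-α - 1))| = α * x ^ α * y ^ (-α - 1) := by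
    rw [abs_mul, abs_mul, abs_neg, abs_of_pos hxα, abs_of_pos hα,
      abs_of_pos (rpow_pos_of_pos hy _)]
    ring
  have hexp : -(c * x ^ (-α)) * (x ^ α * y ^ (-α)) = -(c * y ^ (-α)) := by
    rw [rpow_neg hx.le]
    field_simp
  have hpow : (x ^ α * y ^ (-α)) ^ (-p) = x ^ (-(α * p)) * y ^ (α * p) := by
    rw [mul_rpow hxα.le hyα.le, ← rpow_mul hx.le, ← rpow_mul hy.le]
    ring_nf
  rw [smul_eq_mul, habs, hexp, hpow]
  calc α * x ^ α * y ^ (-α - 1) * (exp (-(c * y ^ (-α))) * (x ^ (-(α * p)) * y ^ (α * p)))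
      = α * (x ^ α * x ^ (-(α * p))) *
          (exp (-(c * y ^ (-α))) * (y ^ (-α - 1) * y ^ (α * p))) := by ring
    _ = α * x ^ (α * (1 - p)) * (exp (-(c * y ^ (-α))) * y ^ (α * (p - 1) - 1)) := by
        rw [← rpow_add hx, ← rpow_add hy]
        ring_nf

theorem mul_sq_mul_genExpInt_eq_integral {α c x : ℝ} (hα : 0 < α) (hx : 0 < x) :
    2 / α * x ^ 2 * genExpInt (1 + 2 / α) (c * x ^ (-α)) =
      2 * ∫ y in 0..x, exp (-(c * y ^ (-α))) * y := by
  have hpow : α * (1 - (1 + 2 / α)) = -2 := by field_simp; ring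
  have hexp : α * (1 + 2 / α - 1) - 1 = 1 := by field_simp; ring
  rw [genExpInt_mul_rpow_neg_eq hα hx, hpow, hexp, integral_of_le hx.le,
    integral_Ioc_eq_integral_Ioo, rpow_neg hx.le, rpow_ofNat]
  simp only [rpow_one]
  field_simp

theorem intervalIntegrable_exp_neg_mul_rpow_neg_mul {α c b : ℝ} (hc : 0 ≤ c) (hb : 0 ≤ b) :
    IntervalIntegrable (fun y => exp (-(c * y ^ (-α))) * y) volume 0 b := by
  refine intervalIntegrable_id.mono_fun' (by fun_prop) ?_
  rw [uIoc_of_le hb]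
  filter_upwards [ae_restrict_mem measurableSet_Ioc] with y ⟨hy, _⟩
  have hexp : exp (-(c * y ^ (-α))) ≤ 1 :=
    exp_le_one_iff.mpr (neg_nonpos.mpr (mul_nonneg hc (rpow_pos_of_pos hy _).le))
  rw [norm_mul, norm_of_nonneg (exp_pos _).le, norm_of_nonneg hy.le]
  exact mul_le_of_le_one_left hy.le hexp

theorem laplace_interference_integral (α δ g s κ R : ℝ)
    (hα : 2 < α) (hδ : δ = 2 / α) (hg : 0 ≤ g) (hs : 0 < s)
    (hκ : 0 < κ) (hκR : κ < R) :
    2 * ∫ x in κ..R, (1 - Real.exp (-s * g * x ^ (-α))) * x =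
      R ^ 2 - κ ^ 2 + δ * κ ^ 2 * genExpInt (1 + δ) (s * κ ^ (-α) * g)
        - δ * R ^ 2 * genExpInt (1 + δ) (s * R ^ (-α) * g) := by
  subst hδ
  have hα₀ : 0 < α := by linarith
  have hc : 0 ≤ s * g := mul_nonneg hs.le hg
  have hR : 0 < R := hκ.trans hκR
  have hIκ := intervalIntegrable_exp_neg_mul_rpow_neg_mul (α := α) hc hκ.le
  have hIR := intervalIntegrable_exp_neg_mul_rpow_neg_mul (α := α) hc hR.le
  have hsplit : ∫ x in κ..R, (1 - exp (-s * g * x ^ (-α))) * x =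
      (∫ x in κ..R, x) - ∫ x in κ..R, exp (-(s * g * x ^ (-α))) * x := by
    simp only [sub_mul, one_mul, neg_mul]
    exact integral_sub intervalIntegrable_id (hIκ.symm.trans hIR)
  rw [mul_right_comm s (κ ^ (-α)), mul_right_comm s (R ^ (-α)),
    mul_sq_mul_genExpInt_eq_integral hα₀ hκ, mul_sq_mul_genExpInt_eq_integral hα₀ hR, hsplit,
    integral_id, ← integral_interval_sub_left hIR hIκ]
  ring
end

section
/- Fix an integer M ≥ 1 and reals c₀ < 0 and c₁, …, c_{M−1} ≥ 0 with μ := −∑_{n=0}^{M−1} c_n > 0. Let C_M be the associated M×M lower triangular Toeplitz matrix. Then as N → ∞, 1 − ‖exp((1/N)·C_M)‖_1 = μ/N + O(1/N²); in particular the outage probability 1 − ‖exp((1/N)C_M)‖_1 is asymptotically equivalent to μ/N. -/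
/-!
For small `t ≥ 0` the matrix `1 + t • C_M` has nonnegative entries, and its `j`-th column sums
to `1 + t (c₀ + ⋯ + c_{M-1-j}) ≤ 1 - μ t`, with equality for the first column because
`c₁, …, c_{M-1} ≥ 0`; so `‖1 + t • C_M‖₁ = 1 - μ t` exactly. The norm is `1`-Lipschitz and
`exp (t • C_M) = 1 + t • C_M + O(t²)` by Taylor's formula for the exponential series, hence
`‖exp (t • C_M)‖₁ = 1 - μ t + O(t²)`. Put `t = 1/N`; the equivalence with `μ/N` follows because
`O(1/N²) = o(μ/N)`.
-/

open Real Matrix NormedSpace Filter Asymptotics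

/-- The `M × M` lower triangular Toeplitz matrix generated by `c 0, …, c (M−1)`. -/
def toeplitzLT (M : ℕ) (c : ℕ → ℝ) : Matrix (Fin M) (Fin M) ℝ :=
  fun i j => if (j : ℕ) ≤ (i : ℕ) then c ((i : ℕ) - (j : ℕ)) else 0

/-- The induced ℓ1 norm (maximum absolute column sum) of a real matrix. -/
noncomputable def inducedL1Norm {M : ℕ} (A : Matrix (Fin M) (Fin M) ℝ) : ℝ :=
  ⨆ j : Fin M, ∑ i : Fin M, |A i j|

open scoped Topology

theorem isBigO_exp_smul_sub_one_sub_smul {𝕂 𝔸 : Type*} [RCLike 𝕂] [NormedRing 𝔸]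
    [NormedAlgebra 𝕂 𝔸] [CompleteSpace 𝔸] (a : 𝔸) :
    (fun t : 𝕂 => exp (t • a) - 1 - t • a) =O[𝓝 0] fun t => t ^ 2 := by
  have hTaylor := (exp_hasFPowerSeriesAt_zero (𝕂 := 𝕂) (𝔸 := 𝔸)).isBigO_sub_partialSum_pow 2
  have hlim : Tendsto (fun t : 𝕂 => t • a) (𝓝 0) (𝓝 0) := by
    simpa using (tendsto_id (x := 𝓝 (0 : 𝕂))).smul_const a
  refine ((hTaylor.comp_tendsto hlim).congr_left fun t => ?_).trans ?_
  · simp only [Function.comp_apply, zero_add, FormalMultilinearSeries.partialSum,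
      expSeries_apply_eq, Finset.sum_range_succ, Finset.range_one, Finset.sum_singleton,
      Nat.factorial_zero, Nat.factorial_one, Nat.cast_one, inv_one, pow_zero, pow_one, one_smul]
    abel
  · refine IsBigO.of_bound (‖a‖ ^ 2) (Eventually.of_forall fun t => ?_)
    simp [norm_smul, mul_pow, mul_comm]

section LinftyOpNorm

attribute [local instance] Matrix.linftyOpNormedAddCommGroup Matrix.linftyOpNormedRing
  Matrix.linftyOpNormedAlgebra

theorem inducedL1Norm_eq_norm_transpose {M : ℕ} (A : Matrix (Fin M) (Fin M) ℝ) :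
    inducedL1Norm A = ‖Aᵀ‖ := by
  simp [inducedL1Norm, linfty_opNorm_def, Finset.sup_univ_eq_ciSup, NNReal.coe_iSup]

theorem abs_inducedL1Norm_sub_le {M : ℕ} (A B : Matrix (Fin M) (Fin M) ℝ) :
    |inducedL1Norm A - inducedL1Norm B| ≤ ‖(A - B)ᵀ‖ := by
  rw [inducedL1Norm_eq_norm_transpose, inducedL1Norm_eq_norm_transpose, transpose_sub]
  exact abs_norm_sub_norm_le _ _

theorem isBigO_inducedL1Norm_exp_smul_sub_inducedL1Norm_one_add {M : ℕ}
    (A : Matrix (Fin M) (Fin M) ℝ) :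
    (fun t : ℝ => inducedL1Norm (exp (t • A)) - inducedL1Norm (1 + t • A)) =O[𝓝 0]
      fun t => t ^ 2 := by
  refine IsBigO.trans ?_ (isBigO_exp_smul_sub_one_sub_smul Aᵀ)
  refine IsBigO.of_bound 1 (Eventually.of_forall fun t => ?_)
  rw [one_mul, Real.norm_eq_abs]
  refine (abs_inducedL1Norm_sub_le _ _).trans_eq ?_
  rw [transpose_sub, transpose_add, transpose_one, transpose_smul, ← exp_transpose,
    transpose_smul, sub_add_eq_sub_sub]
  -- the two sides differ only in the instance path to the ring structure of the matrices
  rfl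

end LinftyOpNorm

theorem sum_toeplitzLT_apply {M : ℕ} (c : ℕ → ℝ) (j : Fin M) :
    ∑ i, toeplitzLT M c i j = ∑ k ∈ Finset.range (M - j), c k := by
  have hj : (j : ℕ) ≤ M := j.is_lt.le
  simp only [toeplitzLT]
  rw [Fin.sum_univ_eq_sum_range (fun i => if (j : ℕ) ≤ i then c (i - j) else 0) M]
  generalize (j : ℕ) = a at hj ⊢
  obtain ⟨d, rfl⟩ := Nat.exists_eq_add_of_le hj
  simp [Finset.sum_range_add, Finset.sum_ite_of_false]

section OneAddSmulToeplitzLT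

variable {M : ℕ} {c : ℕ → ℝ} {t : ℝ}

theorem one_add_smul_toeplitzLT_nonneg (hck : ∀ k : ℕ, 1 ≤ k → k ≤ M - 1 → 0 ≤ c k)
    (ht : 0 ≤ t) (hdiag : 0 ≤ 1 + t * c 0) (i j : Fin M) :
    0 ≤ (1 + t • toeplitzLT M c) i j := by
  rcases lt_trichotomy (i : ℕ) j with hij | hij | hij
  · simp [one_apply_ne (Fin.ne_of_lt hij), toeplitzLT, hij.not_ge]
  · simp [Fin.ext hij, toeplitzLT, hdiag]
  · have := j.is_lt
    simpa [one_apply_ne (Fin.ne_of_gt hij), toeplitzLT, hij.le] using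
      mul_nonneg ht (hck _ (by omega) (by omega))

theorem sum_one_add_smul_toeplitzLT_apply (j : Fin M) :
    ∑ i, (1 + t • toeplitzLT M c) i j = 1 + t * ∑ k ∈ Finset.range (M - j), c k := by
  simp [Finset.sum_add_distrib, one_apply, ← Finset.mul_sum, sum_toeplitzLT_apply]

theorem inducedL1Norm_one_add_smul_toeplitzLT [NeZero M]
    (hck : ∀ k : ℕ, 1 ≤ k → k ≤ M - 1 → 0 ≤ c k) (ht : 0 ≤ t) (hdiag : 0 ≤ 1 + t * c 0) :
    inducedL1Norm (1 + t • toeplitzLT M c) = 1 + t * ∑ n ∈ Finset.range M, c n := by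
  have hcol (j : Fin M) : ∑ i, |(1 + t • toeplitzLT M c) i j| =
      1 + t * ∑ k ∈ Finset.range (M - j), c k := by
    rw [← sum_one_add_smul_toeplitzLT_apply]
    exact Finset.sum_congr rfl fun i _ =>
      abs_of_nonneg (one_add_smul_toeplitzLT_nonneg hck ht hdiag i j)
  refine le_antisymm (ciSup_le fun j => ?_) ?_
  · rw [hcol]
    gcongr
    · intro k hk hk'
      simp only [Finset.mem_range, not_lt] at hk hk'
      exact hck k (by omega) (by omega)
    · omega
  · refine le_ciSup_of_le (Set.finite_range _).bddAbove 0 ?_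
    rw [hcol 0, Fin.val_zero, Nat.sub_zero]

theorem isBigO_inducedL1Norm_exp_smul_toeplitzLT [NeZero M]
    (hck : ∀ k : ℕ, 1 ≤ k → k ≤ M - 1 → 0 ≤ c k) :
    (fun t : ℝ => inducedL1Norm (exp (t • toeplitzLT M c)) -
        (1 + t * ∑ n ∈ Finset.range M, c n)) =O[𝓝[≥] 0] fun t => t ^ 2 := by
  have hdiag : ∀ᶠ t in 𝓝 (0 : ℝ), 0 ≤ 1 + t * c 0 :=
    (continuous_const.add (continuous_id.mul continuous_const)).continuousAt.eventually
      (eventually_ge_nhds (by norm_num : (0 : ℝ) < 1 + 0 * c 0))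
  refine ((isBigO_inducedL1Norm_exp_smul_sub_inducedL1Norm_one_add (toeplitzLT M c)).mono
    nhdsWithin_le_nhds).congr' ?_ EventuallyEq.rfl
  filter_upwards [self_mem_nhdsWithin, nhdsWithin_le_nhds hdiag] with t ht htc
  rw [inducedL1Norm_one_add_smul_toeplitzLT hck ht htc]

end OneAddSmulToeplitzLT

theorem asymptotic_outage_general (M : ℕ) (hM : 1 ≤ M) (c : ℕ → ℝ)
    (hck : ∀ k : ℕ, 1 ≤ k → k ≤ M - 1 → 0 ≤ c k)
    (hμ : 0 < -(∑ n ∈ Finset.range M, c n)) :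
    ((fun N : ℕ => (1 - inducedL1Norm (exp ((1 / (N : ℝ)) • toeplitzLT M c))) -
        (-(∑ n ∈ Finset.range M, c n)) / N) =O[atTop]
      (fun N : ℕ => 1 / (N : ℝ) ^ 2)) ∧
    Tendsto (fun N : ℕ =>
        (1 - inducedL1Norm (exp ((1 / (N : ℝ)) • toeplitzLT M c))) /
          ((-(∑ n ∈ Finset.range M, c n)) / N))
      atTop (nhds 1) := by
  have : NeZero M := ⟨by omega⟩
  set μ := -(∑ n ∈ Finset.range M, c n)
  have hinv : Tendsto (fun N : ℕ => 1 / (N : ℝ)) atTop (𝓝[≥] 0) :=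
    tendsto_nhdsWithin_iff.2 ⟨tendsto_one_div_atTop_nhds_zero_nat,
      Eventually.of_forall fun N => Set.mem_Ici.2 (by positivity)⟩
  have hbigO : (fun N : ℕ => (1 - inducedL1Norm (exp ((1 / (N : ℝ)) • toeplitzLT M c))) - μ / N)
      =O[atTop] fun N : ℕ => 1 / (N : ℝ) ^ 2 :=
    ((isBigO_inducedL1Norm_exp_smul_toeplitzLT hck).comp_tendsto hinv).neg_left.congr
      (fun N => by simp only [Function.comp_apply, μ]; ring) (fun N => by simp)
  have hlittle : (fun N : ℕ => 1 / (N : ℝ) ^ 2) =o[atTop] fun N : ℕ => μ / N :=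
    (((isLittleO_pow_id one_lt_two).mono nhdsWithin_le_nhds).const_mul_right hμ.ne'
      |>.comp_tendsto hinv).congr (fun N => by simp)
        (fun N => by simp only [Function.comp_apply]; ring)
  refine ⟨hbigO, (isEquivalent_iff_tendsto_one ?_).1 (hbigO.trans_isLittleO hlittle).isEquivalent⟩
  filter_upwards [eventually_ne_atTop 0] with N hN
  positivity

theorem asymptotic_outage (M : ℕ) (hM : 1 ≤ M) (c : ℕ → ℝ)
    (hc0 : c 0 < 0) (hck : ∀ k : ℕ, 1 ≤ k → k ≤ M - 1 → 0 ≤ c k)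
    (hμ : 0 < -(∑ n ∈ Finset.range M, c n)) :
    ((fun N : ℕ => (1 - inducedL1Norm (exp ((1 / (N : ℝ)) • toeplitzLT M c))) -
        (-(∑ n ∈ Finset.range M, c n)) / N) =O[atTop]
      (fun N : ℕ => 1 / (N : ℝ) ^ 2)) ∧
    Tendsto (fun N : ℕ =>
        (1 - inducedL1Norm (exp ((1 / (N : ℝ)) • toeplitzLT M c))) /
          ((-(∑ n ∈ Finset.range M, c n)) / N))
      atTop (nhds 1) :=
  asymptotic_outage_general M hM c hck hμ
end
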